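/- arXiv:1903.11141 — 8 statements merged into one kernel-verified Lean document; each statement's English description precedes it below -/
import Mathlib

section
/- For every integer n ≥ 2, 1/2^n < ζ(n) − 1 < (1/2^n)·(n+1)/(n−1). -/
/-!
Split `ζ(n) - 1 = 2⁻ⁿ + ∑_{m ≥ 3} m⁻ⁿ`. The tail is positive, and each of its terms is smaller
than `∫_{m-1}^{m} t⁻ⁿ dt`, so it telescopes to less than `1 / ((n - 1) 2ⁿ⁻¹)`; adding `2⁻ⁿ` gives
`2⁻ⁿ (n + 1) / (n - 1)`.
-/

open Finset

lemma riemannZeta_natCast_re {n : ℕ} (hn : 1 < n) :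
    (riemannZeta n).re = ∑' m : ℕ, 1 / (m : ℝ) ^ n := by
  rw [zeta_nat_eq_tsum_of_gt_one hn, ← Complex.ofReal_re (∑' m : ℕ, 1 / (m : ℝ) ^ n),
    Complex.ofReal_tsum]
  push_cast
  rfl

/-- The comparison `1 / (x + 1) ^ (k + 1) < ∫_x^{x+1} t^{-(k+1)} dt`, proved via Bernoulli's
inequality `x ^ k + k x ^ (k - 1) ≤ (x + 1) ^ k`. -/
lemma one_div_add_one_pow_succ_lt {x : ℝ} (hx : 0 < x) {k : ℕ} (hk : k ≠ 0) :
    1 / (x + 1) ^ (k + 1) < (1 / x ^ k - 1 / (x + 1) ^ k) / k := by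
  have bernoulli : x ^ k + k * x ^ (k - 1) ≤ (x + 1) ^ k := by
    simpa using pow_add_mul_le_add_pow hx.le (by linarith : 0 ≤ 2 * x + 1) k
  have hxk : x ^ (k - 1) * x = x ^ k := by rw [← pow_succ, Nat.sub_add_cancel (by omega)]
  have key : k * x ^ k < ((x + 1) ^ k - x ^ k) * (x + 1) := by
    have : (0 : ℝ) < k * x ^ (k - 1) := by positivity
    nlinarith
  have hk' : (0 : ℝ) < k := by positivity
  rw [lt_div_iff₀ hk', div_sub_div _ _ (by positivity) (by positivity), pow_succ,
    div_mul_eq_mul_div, div_lt_div_iff₀ (by positivity) (by positivity)]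
  nlinarith [mul_lt_mul_of_pos_right key (pow_pos (by linarith : 0 < x + 1) k)]

lemma tsum_lt_of_lt_sub_succ {a g : ℕ → ℝ} (ha : ∀ m, 0 ≤ a m) (hg : ∀ m, 0 ≤ g m)
    (hag : ∀ m, a m < g m - g (m + 1)) : ∑' m, a m < g 0 := by
  have partial_le (N : ℕ) : ∑ m ∈ range N, a (m + 1) ≤ g 1 := by
    calc ∑ m ∈ range N, a (m + 1) ≤ ∑ m ∈ range N, (g (m + 1) - g (m + 1 + 1)) :=
          sum_le_sum fun m _ => (hag (m + 1)).le
      _ = g 1 - g (N + 1) := sum_range_sub' (fun m => g (m + 1)) N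
      _ ≤ g 1 := sub_le_self _ (hg _)
  have summable_tail := summable_of_sum_range_le (fun m => ha (m + 1)) partial_le
  rw [((summable_nat_add_iff 1).mp summable_tail).tsum_eq_zero_add]
  linarith [hag 0, Real.tsum_le_of_sum_range_le (fun m => ha (m + 1)) partial_le]

lemma tsum_one_div_add_pow_succ_lt {c : ℝ} (hc : 0 < c) {k : ℕ} (hk : k ≠ 0) :
    ∑' m : ℕ, 1 / ((m : ℝ) + c + 1) ^ (k + 1) < 1 / c ^ k / k := by
  simpa using tsum_lt_of_lt_sub_succ (a := fun m : ℕ => 1 / ((m : ℝ) + c + 1) ^ (k + 1))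
    (g := fun m : ℕ => 1 / ((m : ℝ) + c) ^ k / k) (fun m => by positivity) (fun m => by positivity)
    fun m => by
      rw [← sub_div, Nat.cast_succ, add_right_comm _ 1 c]
      exact one_div_add_one_pow_succ_lt (by positivity) hk

theorem zeta_sub_one_bounds (n : ℕ) (hn : 2 ≤ n) :
    1 / 2 ^ n < (riemannZeta n).re - 1 ∧
    (riemannZeta n).re - 1 < 1 / 2 ^ n * ((n + 1) / (n - 1) : ℝ) := by
  obtain ⟨k, rfl⟩ : ∃ k, n = k + 1 := ⟨n - 1, by omega⟩
  have hk : k ≠ 0 := by omega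
  have summable : Summable fun m : ℕ => 1 / (m : ℝ) ^ (k + 1) :=
    Real.summable_one_div_nat_pow.mpr (by omega)
  have split : (riemannZeta (k + 1 : ℕ)).re - 1 =
      1 / 2 ^ (k + 1) + ∑' m : ℕ, 1 / ((m : ℝ) + 2 + 1) ^ (k + 1) := by
    rw [riemannZeta_natCast_re (by omega), ← summable.sum_add_tsum_nat_add 3]
    norm_num [sum_range_succ, add_assoc]
  have tail_pos : 0 < ∑' m : ℕ, 1 / ((m : ℝ) + 2 + 1) ^ (k + 1) := by
    have summable_tail : Summable fun m : ℕ => 1 / ((m : ℝ) + 2 + 1) ^ (k + 1) := by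
      simpa [add_assoc, one_add_one_eq_two, two_add_one_eq_three] using
        (summable_nat_add_iff 3).mpr summable
    exact summable_tail.tsum_pos (fun m => by positivity) 0 (by positivity)
  have tail_lt := tsum_one_div_add_pow_succ_lt two_pos hk
  rw [split]
  refine ⟨by linarith, ?_⟩
  calc 1 / 2 ^ (k + 1) + ∑' m : ℕ, 1 / ((m : ℝ) + 2 + 1) ^ (k + 1)
      < 1 / 2 ^ (k + 1) + 1 / 2 ^ k / k := by linarith
    _ = 1 / 2 ^ (k + 1) * (((k + 1 : ℕ) + 1) / ((k + 1 : ℕ) - 1) : ℝ) := by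
      have : (k : ℝ) ≠ 0 := by exact_mod_cast hk
      push_cast
      rw [add_sub_cancel_right]
      field_simp
      ring
end

section
/- The series ∑_{n=2}^∞ (ζ(n) − 1)/n converges to 1 − γ. -/
/-!
Since `ζ(n) - 1 = ∑_{k ≥ 2} k⁻ⁿ`, the series is the double series `∑_{n ≥ 2} ∑_{k ≥ 2} k⁻ⁿ / n`
of nonnegative terms, which may be summed over `n` first. For fixed `k` the sum over `n` is
`-log (1 - 1/k) - 1/k = log k - log (k - 1) - 1/k`, and these telescope to partial sums
`1 - (H_K - log K)`, which tend to `1 - γ`.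
-/

open Filter Real

theorem hasSum_tsum_swap_of_nonneg {α β : Type*} {f : α → β → ℝ} (hf : ∀ a b, 0 ≤ f a b)
    {g : α → ℝ} {s : ℝ} (hg : ∀ a, HasSum (f a) (g a)) (hs : HasSum g s) :
    HasSum (fun b => ∑' a, f a b) s := by
  have hsum : Summable (fun p : α × β => f p.1 p.2) :=
    (summable_prod_of_nonneg fun p => hf p.1 p.2).2
      ⟨fun a => (hg a).summable, by simpa only [(hg _).tsum_eq] using hs.summable⟩
  have htotal : HasSum (fun p : α × β => f p.1 p.2) s := by
    rw [hsum.hasSum_iff, hsum.tsum_prod]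
    simpa only [(hg _).tsum_eq] using hs.tsum_eq
  have hswap : HasSum (fun p : β × α => f p.2 p.1) s :=
    (Equiv.prodComm β α).hasSum_iff.mpr htotal
  exact hswap.prod_fiberwise fun b => (hswap.summable.prod_factor b).hasSum

theorem hasSum_pow_add_two_div {x : ℝ} (hx : |x| < 1) :
    HasSum (fun n : ℕ => x ^ (n + 2) / (n + 2)) (-log (1 - x) - x) := by
  have h := (hasSum_nat_add_iff' 1).mpr (hasSum_pow_div_log_of_abs_lt_one hx)
  simp only [Finset.sum_range_one, Nat.cast_add, Nat.cast_zero, Nat.cast_one] at h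
  have hterm : (fun n : ℕ => x ^ (n + 2) / ((n : ℝ) + 2))
      = fun n : ℕ => x ^ (n + 1 + 1) / ((n : ℝ) + 1 + 1) := by
    ext n; ring
  rw [hterm]
  simpa using h

theorem hasSum_pow_add_two_div_inv_nat_add_two (k : ℕ) :
    HasSum (fun n : ℕ => ((k : ℝ) + 2)⁻¹ ^ (n + 2) / (n + 2))
      (log (k + 2) - log (k + 1) - ((k : ℝ) + 2)⁻¹) := by
  have hx : |((k : ℝ) + 2)⁻¹| < 1 := by
    rw [abs_inv, inv_lt_one₀ (by positivity), abs_of_pos (by positivity)]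
    linarith [(Nat.cast_nonneg k : (0 : ℝ) ≤ k)]
  convert hasSum_pow_add_two_div hx using 2
  have : 1 - ((k : ℝ) + 2)⁻¹ = (k + 1) / (k + 2) := by field_simp; ring
  rw [this, log_div (by positivity) (by positivity)]
  ring

theorem sum_range_inv_nat_add_two (K : ℕ) :
    ∑ k ∈ Finset.range K, ((k : ℝ) + 2)⁻¹ = harmonic (K + 1) - 1 := by
  simp only [harmonic, Finset.sum_range_succ', Rat.cast_add, Rat.cast_sum, Rat.cast_inv]
  push_cast
  ring_nf

theorem hasSum_log_sub_log_sub_inv :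
    HasSum (fun k : ℕ => log (k + 2) - log (k + 1) - ((k : ℝ) + 2)⁻¹)
      (1 - eulerMascheroniConstant) := by
  have hnonneg (k : ℕ) : 0 ≤ log (k + 2) - log (k + 1) - ((k : ℝ) + 2)⁻¹ :=
    (hasSum_pow_add_two_div_inv_nat_add_two k).nonneg fun n => by positivity
  have hpartial (K : ℕ) : ∑ k ∈ Finset.range K, (log (k + 2) - log (k + 1) - ((k : ℝ) + 2)⁻¹)
      = 1 - (harmonic (K + 1) - log (K + 1)) := by
    have htelescope : ∑ k ∈ Finset.range K, (log ((k : ℝ) + 2) - log (k + 1)) = log (K + 1) := by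
      simpa [add_assoc, one_add_one_eq_two] using
        Finset.sum_range_sub (fun k : ℕ => log ((k : ℝ) + 1)) K
    rw [Finset.sum_sub_distrib, htelescope, sum_range_inv_nat_add_two]
    ring
  rw [hasSum_iff_tendsto_nat_of_nonneg hnonneg]
  simp only [hpartial]
  refine tendsto_const_nhds.sub ?_
  exact_mod_cast tendsto_harmonic_sub_log.comp (tendsto_add_atTop_nat 1)

theorem hasSum_zeta_sub_one {m : ℕ} (hm : 1 < m) :
    HasSum (fun k : ℕ => 1 / ((k : ℂ) + 2) ^ m) (riemannZeta m - 1) := by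
  have hsum : Summable (fun k : ℕ => 1 / (k : ℂ) ^ m) := by
    refine (Complex.summable_ofReal.mpr (Real.summable_one_div_nat_pow.mpr hm)).congr fun k => ?_
    push_cast; rfl
  have := (hasSum_nat_add_iff' 2).mpr (zeta_nat_eq_tsum_of_gt_one hm ▸ hsum.hasSum)
  simpa [Finset.sum_range_succ, zero_pow (by omega : m ≠ 0)] using this

theorem euler_series :
    HasSum (fun n : ℕ => (riemannZeta ((n : ℂ) + 2) - 1) / ((n : ℂ) + 2))
      (1 - (Real.eulerMascheroniConstant : ℂ)) := by
  set f : ℕ → ℕ → ℝ := fun k n => ((k : ℝ) + 2)⁻¹ ^ (n + 2) / (n + 2)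
  have hcolumns : HasSum (fun n => ∑' k, f k n) (1 - eulerMascheroniConstant) :=
    hasSum_tsum_swap_of_nonneg (fun _ _ => by positivity) hasSum_pow_add_two_div_inv_nat_add_two
      hasSum_log_sub_log_sub_inv
  have hcolumn (n : ℕ) :
      HasSum (fun k => (f k n : ℂ)) ((riemannZeta ((n : ℂ) + 2) - 1) / ((n : ℂ) + 2)) := by
    have := (hasSum_zeta_sub_one (m := n + 2) (by omega)).div_const ((n : ℂ) + 2)
    simp only [f]
    push_cast at this ⊢
    simpa only [inv_pow, one_div] using this
  have hcast := Complex.hasSum_ofReal.mpr hcolumns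
  rw [Complex.ofReal_sub, Complex.ofReal_one] at hcast
  refine hcast.congr_fun fun n => ?_
  rw [Complex.ofReal_tsum, (hcolumn n).tsum_eq]
end

section
/- The alternating series ∑_{n=2}^∞ (−1)^n ζ(n)/n converges to γ. -/
/-!
Write `ζ(n) = 1 + ∑_{k ≥ 2} k⁻ⁿ`. The constant terms give the alternating series
`∑_{n ≥ 2} (-1)ⁿ / n = 1 - log 2`, whose even partial sums are `H_{2N} - H_N → log 2`.
The rest is an absolutely convergent double series, so it may be summed over `n` first:
`∑_{n ≥ 2} (-x)ⁿ / n = x - log (1 + x)` at `x = 1 / k`, and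
`∑_{k ≥ 1} (1 / k - log (1 + 1 / k))` telescopes to `lim (H_K - log (K + 1)) = γ`,
so the terms `k ≥ 2` contribute `γ - 1 + log 2`.
-/

open Filter Topology Finset Real

theorem hasSum_neg_pow_div_add_two {x : ℝ} (hx : |x| < 1) :
    HasSum (fun n : ℕ => (-x) ^ (n + 2) / (n + 2)) (x - log (1 + x)) := by
  have h := (hasSum_nat_add_iff' 1).mpr
    (hasSum_pow_div_log_of_abs_lt_one (x := -x) (by rwa [abs_neg]))
  rw [sum_range_one, sub_neg_eq_add, show -log (1 + x) - (-x) ^ (0 + 1) / ((0 : ℕ) + 1 : ℝ)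
    = x - log (1 + x) by norm_num; ring] at h
  exact h.congr_fun fun n => by push_cast; ring

theorem hasSum_one_div_add_one_sub_log_one_add :
    HasSum (fun k : ℕ => 1 / (k + 1 : ℝ) - log (1 + 1 / (k + 1))) eulerMascheroniConstant := by
  have hlog (k : ℕ) : log (1 + 1 / (k + 1 : ℝ)) = log (↑(k + 1) + 1) - log (k + 1) := by
    rw [← log_div (by positivity) (by positivity)]
    congr 1
    field_simp
    push_cast
    ring
  have hnonneg (k : ℕ) : 0 ≤ 1 / (k + 1 : ℝ) - log (1 + 1 / (k + 1)) := by
    linarith [log_le_sub_one_of_pos (x := 1 + 1 / (k + 1 : ℝ)) (by positivity)]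
  rw [hasSum_iff_tendsto_nat_of_nonneg hnonneg]
  refine tendsto_eulerMascheroniSeq.congr fun K => ?_
  simp only [sum_sub_distrib, hlog, sum_range_sub (fun k : ℕ => log (k + 1 : ℝ)),
    eulerMascheroniSeq, harmonic]
  push_cast
  simp [one_div]

theorem hasSum_one_div_add_two_sub_log_one_add :
    HasSum (fun k : ℕ => 1 / (k + 2 : ℝ) - log (1 + 1 / (k + 2)))
      (eulerMascheroniConstant - 1 + log 2) := by
  have h := (hasSum_nat_add_iff' 1).mpr hasSum_one_div_add_one_sub_log_one_add
  rw [sum_range_one, show eulerMascheroniConstant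
      - (1 / ((0 : ℕ) + 1 : ℝ) - log (1 + 1 / ((0 : ℕ) + 1)))
    = eulerMascheroniConstant - 1 + log 2 by norm_num; ring] at h
  exact h.congr_fun fun k => by push_cast; ring_nf

theorem norm_neg_pow_div_le {y : ℝ} (hy₀ : 0 ≤ y) (hy : y ≤ 1 / 2) (n : ℕ) :
    ‖(-y) ^ (n + 2) / (n + 2)‖ ≤ (1 / 2) ^ n * y ^ 2 :=
  calc ‖(-y) ^ (n + 2) / (n + 2)‖ = y ^ (n + 2) / (n + 2) := by
        rw [norm_div, norm_pow, norm_neg, norm_of_nonneg hy₀, norm_of_nonneg (by positivity)]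
    _ ≤ y ^ (n + 2) := div_le_self (by positivity) (by linarith [n.cast_nonneg (α := ℝ)])
    _ = y ^ n * y ^ 2 := pow_add y n 2
    _ ≤ (1 / 2) ^ n * y ^ 2 := by gcongr

theorem summable_one_div_add_two_sq : Summable fun k : ℕ => (1 / (k + 2 : ℝ)) ^ 2 := by
  simpa [one_div] using (summable_nat_add_iff 2).mpr (summable_one_div_nat_pow.mpr one_lt_two)

theorem summable_uncurry_neg_one_div_add_two_pow_div :
    Summable (Function.uncurry fun (n k : ℕ) => (-(1 / (k + 2 : ℝ))) ^ (n + 2) / (n + 2)) :=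
  Summable.of_norm_bounded
    (summable_geometric_two.mul_of_nonneg summable_one_div_add_two_sq
      (fun _ => by positivity) (fun _ => by positivity))
    fun ⟨n, k⟩ => norm_neg_pow_div_le (by positivity)
      (one_div_le_one_div_of_le two_pos (by simp)) n

theorem hasSum_neg_one_pow_mul_tsum_div :
    HasSum (fun n : ℕ => (-1) ^ (n + 2) * (∑' k : ℕ, (1 / (k + 2 : ℝ)) ^ (n + 2)) / (n + 2))
      (eulerMascheroniConstant - 1 + log 2) := by
  have hf := summable_uncurry_neg_one_div_add_two_pow_div
  have hinner (k : ℕ) : HasSum (fun n : ℕ => (-(1 / (k + 2 : ℝ))) ^ (n + 2) / (n + 2))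
      (1 / (k + 2 : ℝ) - log (1 + 1 / (k + 2))) := by
    refine hasSum_neg_pow_div_add_two ?_
    rw [abs_of_pos (by positivity), div_lt_one (by positivity)]
    linarith [k.cast_nonneg (α := ℝ)]
  have h := hf.prod.hasSum
  simp only [Function.uncurry_apply_pair] at h
  rw [← hf.tsum_comm, tsum_congr fun k => (hinner k).tsum_eq,
    hasSum_one_div_add_two_sub_log_one_add.tsum_eq] at h
  refine h.congr_fun fun n => ?_
  simp only [neg_pow (1 / _ : ℝ), mul_div_assoc, tsum_mul_left, tsum_div_const]

theorem sum_range_two_mul_neg_one_pow_div_add_one (N : ℕ) :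
    ∑ n ∈ range (2 * N), (-1 : ℝ) ^ n / (n + 1) = harmonic (2 * N) - harmonic N := by
  induction N with
  | zero => simp
  | succ N ih =>
    rw [mul_add_one, sum_range_succ, sum_range_succ, ih, harmonic_succ, harmonic_succ,
      harmonic_succ, pow_succ, pow_mul]
    push_cast
    field_simp
    ring

theorem tendsto_sum_range_neg_one_pow_div_add_one :
    Tendsto (fun N : ℕ => ∑ n ∈ range N, (-1 : ℝ) ^ n / (n + 1)) atTop (𝓝 (log 2)) := by
  have hanti : Antitone fun n : ℕ => 1 / (n + 1 : ℝ) := fun a b hab => by dsimp only; gcongr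
  obtain ⟨l, hl⟩ := hanti.tendsto_alternating_series_of_tendsto_zero
    tendsto_one_div_add_atTop_nhds_zero_nat
  simp only [mul_one_div] at hl
  have h2 : Tendsto (fun N : ℕ => 2 * N) atTop atTop := tendsto_id.const_mul_atTop' two_pos
  have heven : Tendsto (fun N : ℕ => ∑ n ∈ range (2 * N), (-1 : ℝ) ^ n / (n + 1)) atTop
      (𝓝 (log 2)) := by
    have h := ((tendsto_harmonic_sub_log.comp h2).sub tendsto_harmonic_sub_log).add_const (log 2)
    rw [sub_self, zero_add] at h
    refine h.congr' ?_
    filter_upwards [eventually_ne_atTop 0] with N hN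
    rw [sum_range_two_mul_neg_one_pow_div_add_one, Function.comp_apply, Nat.cast_mul,
      Nat.cast_ofNat, log_mul two_ne_zero (by positivity)]
    ring
  rwa [tendsto_nhds_unique (hl.comp h2) heven] at hl

theorem tendsto_sum_range_neg_one_pow_div_add_two :
    Tendsto (fun N : ℕ => ∑ n ∈ range N, (-1 : ℝ) ^ (n + 2) / (n + 2)) atTop
      (𝓝 (1 - log 2)) := by
  refine ((tendsto_sum_range_neg_one_pow_div_add_one.comp (tendsto_add_atTop_nat 1)).const_sub
    1).congr fun N => ?_
  simp only [Function.comp_apply, sum_range_succ', pow_succ, pow_zero]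
  push_cast
  simp only [mul_neg_one, neg_neg, neg_div, sum_neg_distrib, add_assoc, one_add_one_eq_two]
  norm_num

theorem riemannZeta_nat_add_two (n : ℕ) :
    riemannZeta (n + 2) = 1 + ((∑' k : ℕ, (1 / (k + 2 : ℝ)) ^ (n + 2) : ℝ) : ℂ) := by
  have hs : Summable fun m : ℕ => 1 / (m : ℝ) ^ (n + 2) :=
    summable_one_div_nat_pow.mpr (by omega)
  have hcast : ((∑' m : ℕ, 1 / (m : ℝ) ^ (n + 2) : ℝ) : ℂ)
      = ∑' m : ℕ, 1 / (m : ℂ) ^ (n + 2) := by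
    rw [Complex.ofReal_tsum]
    push_cast
    rfl
  rw [show (n + 2 : ℂ) = (n + 2 : ℕ) by push_cast; rfl, zeta_nat_eq_tsum_of_gt_one (by omega),
    ← hcast, ← hs.sum_add_tsum_nat_add 2]
  simp [sum_range_succ]

theorem alternating_zeta_over_n :
    Tendsto (fun N : ℕ => ∑ n ∈ Finset.range N,
        (-1 : ℂ) ^ (n + 2) * riemannZeta ((n : ℂ) + 2) / ((n : ℂ) + 2))
      atTop (𝓝 (Real.eulerMascheroniConstant : ℂ)) := by
  have h := tendsto_sum_range_neg_one_pow_div_add_two.add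
    hasSum_neg_one_pow_mul_tsum_div.tendsto_sum_nat
  rw [show 1 - log 2 + (eulerMascheroniConstant - 1 + log 2) = eulerMascheroniConstant by ring]
    at h
  refine ((Complex.continuous_ofReal.tendsto _).comp h).congr fun N => ?_
  simp only [Function.comp_apply, ← sum_add_distrib, Complex.ofReal_sum]
  refine sum_congr rfl fun n _ => ?_
  rw [riemannZeta_nat_add_two]
  push_cast
  ring
end

section
/- ∑_{n=1}^∞ H_n (ζ(n+1) − 1) = ∑_{n=1}^∞ (1/n)·ln(1 + 1/n), where H_n = 1 + 1/2 + ⋯ + 1/n is the n-th harmonic number. -/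
/-!
Expanding ζ(n + 2) - 1 = ∑_{k ≥ 2} k^{-(n + 2)} turns the left side into a double series of
nonnegative terms, so the order of summation may be swapped. For fixed `k` the inner series is
x times the generating function ∑ Hₙ xⁿ = -log(1 - x) / (1 - x) (a Cauchy product of the series
of -log(1 - x) and of 1 / (1 - x)) at x = 1 / k, that is, log(k / (k - 1)) / (k - 1).
-/

open Finset

theorem tsum_comm_of_nonneg {β γ : Type*} {f : β → γ → ℝ} (hf : ∀ b c, 0 ≤ f b c)
    (hinner : ∀ b, Summable (f b)) (houter : Summable fun b ↦ ∑' c, f b c) :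
    ∑' c, ∑' b, f b c = ∑' b, ∑' c, f b c := by
  have h : Summable (Function.uncurry f) :=
    (summable_prod_of_nonneg fun p ↦ hf p.1 p.2).2 ⟨hinner, houter⟩
  exact h.tsum_comm' hinner fun c ↦ h.prod_symm.prod_factor c

theorem harmonic_succ_mul_pow_eq_sum_range (x : ℝ) (n : ℕ) :
    (harmonic (n + 1) : ℝ) * x ^ (n + 1) =
      ∑ k ∈ range (n + 1), x ^ (k + 1) / (k + 1) * x ^ (n - k) := by
  simp only [harmonic, Rat.cast_sum, Rat.cast_inv, Nat.cast_add, Nat.cast_one, Rat.cast_add,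
    Rat.cast_natCast, Rat.cast_one, sum_mul]
  refine sum_congr rfl fun k hk ↦ ?_
  rw [div_mul_eq_mul_div, ← pow_add, Nat.add_right_comm, Nat.add_sub_of_le
    (Nat.lt_succ_iff.mp (mem_range.mp hk)), div_eq_inv_mul]

theorem hasSum_harmonic_succ_mul_pow {x : ℝ} (hx : |x| < 1) :
    HasSum (fun n ↦ (harmonic (n + 1) : ℝ) * x ^ (n + 1)) (-Real.log (1 - x) / (1 - x)) := by
  have hlog := Real.hasSum_pow_div_log_of_abs_lt_one hx
  have hgeom := hasSum_geometric_of_abs_lt_one hx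
  have hlog_norm : Summable fun n : ℕ ↦ ‖x ^ (n + 1) / (n + 1)‖ := by
    refine (Real.hasSum_pow_div_log_of_abs_lt_one (x := |x|) (by rwa [abs_abs])).summable.congr
      fun n ↦ ?_
    rw [Real.norm_eq_abs, abs_div, abs_pow, abs_of_pos (by positivity : (0 : ℝ) < n + 1)]
  have hgeom_norm : Summable fun n : ℕ ↦ ‖x ^ n‖ := by
    simpa [norm_pow] using summable_geometric_of_abs_lt_one (by rwa [abs_abs] : |(|x|)| < 1)
  have h := hasSum_sum_range_mul_of_summable_norm hlog_norm hgeom_norm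
  rw [hlog.tsum_eq, hgeom.tsum_eq, ← div_eq_mul_inv] at h
  simpa only [harmonic_succ_mul_pow_eq_sum_range] using h

theorem hasSum_harmonic_succ_div_pow {b : ℝ} (hb : 0 < b) :
    HasSum (fun n ↦ (harmonic (n + 1) : ℝ) / (b + 1) ^ (n + 2)) (Real.log (1 + 1 / b) / b) := by
  have hx : |(b + 1)⁻¹| < 1 := by
    rw [abs_inv, abs_of_pos (by positivity)]
    exact inv_lt_one_of_one_lt₀ (by linarith)
  have h1x : 1 - (b + 1)⁻¹ = (1 + 1 / b)⁻¹ := by field_simp; ring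
  have h := (hasSum_harmonic_succ_mul_pow hx).mul_left (b + 1)⁻¹
  rw [h1x, Real.log_inv, neg_neg] at h
  have hterm (n : ℕ) : (harmonic (n + 1) : ℝ) / (b + 1) ^ (n + 2) =
      (b + 1)⁻¹ * (harmonic (n + 1) * (b + 1)⁻¹ ^ (n + 1)) := by
    rw [div_eq_mul_inv, ← inv_pow, pow_succ' _ (n + 1)]
    ring
  have hvalue : Real.log (1 + 1 / b) / b =
      (b + 1)⁻¹ * (Real.log (1 + 1 / b) / (1 + 1 / b)⁻¹) := by
    field_simp
  simpa only [hterm, hvalue] using h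

theorem log_one_add_one_div_div_le {b : ℝ} (hb : 0 < b) :
    Real.log (1 + 1 / b) / b ≤ 1 / b ^ 2 := by
  calc Real.log (1 + 1 / b) / b ≤ (1 / b) / b := by
        gcongr
        linarith [Real.log_le_sub_one_of_pos (by positivity : 0 < 1 + 1 / b)]
    _ = 1 / b ^ 2 := by ring

theorem summable_one_div_nat_add_one_pow {m : ℕ} (hm : 1 < m) :
    Summable fun k : ℕ ↦ 1 / ((k : ℝ) + 1) ^ m :=
  (summable_nat_add_iff 1).mpr (Real.summable_one_div_nat_pow.mpr hm) |>.congr fun k ↦ by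
    push_cast; rfl

theorem riemannZeta_natCast_sub_one {m : ℕ} (hm : 1 < m) :
    riemannZeta m - 1 = ((∑' k : ℕ, 1 / ((k : ℝ) + 2) ^ m : ℝ) : ℂ) := by
  have hreal : riemannZeta m = ((∑' k : ℕ, 1 / ((k : ℝ) + 1) ^ m : ℝ) : ℂ) := by
    rw [zeta_eq_tsum_one_div_nat_add_one_cpow (by simpa using hm), Complex.ofReal_tsum]
    push_cast
    simp only [Complex.cpow_natCast]
  rw [hreal, (summable_one_div_nat_add_one_pow hm).tsum_eq_zero_add]
  push_cast
  ring_nf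

theorem harmonic_zeta_series_eq_log_series :
    ∑' n : ℕ, (harmonic (n + 1) : ℂ) * (riemannZeta ((n : ℂ) + 2) - 1) =
      ((∑' n : ℕ, (1 / ((n : ℝ) + 1)) * Real.log (1 + 1 / ((n : ℝ) + 1)) : ℝ) : ℂ) := by
  set f : ℕ → ℕ → ℝ := fun k n ↦ (harmonic (n + 1) : ℝ) / ((k : ℝ) + 2) ^ (n + 2)
  have hf (k n : ℕ) : 0 ≤ f k n := by
    have : (0 : ℝ) ≤ harmonic (n + 1) := by exact_mod_cast (harmonic_pos n.succ_ne_zero).le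
    positivity
  have hrow (k : ℕ) : HasSum (f k) (Real.log (1 + 1 / ((k : ℝ) + 1)) / ((k : ℝ) + 1)) := by
    simpa only [f, add_assoc, one_add_one_eq_two] using
      hasSum_harmonic_succ_div_pow (b := (k : ℝ) + 1) (by positivity)
  have hcol (n : ℕ) : harmonic (n + 1) * (riemannZeta ((n : ℂ) + 2) - 1) =
      ((∑' k, f k n : ℝ) : ℂ) := by
    rw [show (n : ℂ) + 2 = ((n + 2 : ℕ) : ℂ) by push_cast; rfl,
      riemannZeta_natCast_sub_one (by omega)]
    simp only [f, div_eq_mul_inv, tsum_mul_left, one_mul]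
    push_cast
    rfl
  have hswap : ∑' n, ∑' k, f k n = ∑' k, ∑' n, f k n := by
    refine tsum_comm_of_nonneg hf (fun k ↦ (hrow k).summable) ?_
    refine .of_nonneg_of_le (fun k ↦ tsum_nonneg (hf k))
      (fun k ↦ (hrow k).tsum_eq ▸ log_one_add_one_div_div_le (by positivity))
      (summable_one_div_nat_add_one_pow one_lt_two)
  rw [tsum_congr hcol, ← Complex.ofReal_tsum, hswap, tsum_congr fun k ↦ (hrow k).tsum_eq]
  congr 2 with k
  ring
end

section
/- For every integer n ≥ 2, ∑_{k=2}^∞ 1/(k^n (k−1)) = n − ζ(2) − ζ(3) − ⋯ − ζ(n). -/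
/-!
With `m = k + 2`, the partial fraction identity `1/(m^(n+1) (m-1)) = 1/(m^n (m-1)) - 1/m^(n+1)`
shows that raising `n` by one subtracts `∑_{m ≥ 2} m^-(n+1) = ζ(n+1) - 1` from the series, and
for `n = 1` the series telescopes to `1`. Carrying `HasSum` through the induction keeps track of
summability for free.
-/

open Finset

theorem one_div_pow_succ_mul_eq_sub {K : Type*} [Field K] {x y : K} (hx : x ≠ 0) (hy : y ≠ 0)
    (hxy : x = y + 1) (n : ℕ) :
    1 / (x ^ (n + 1) * y) = 1 / (x ^ n * y) - 1 / x ^ (n + 1) := by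
  subst hxy
  field_simp
  ring

theorem hasSum_one_div_add_two_mul_add_one :
    HasSum (fun k : ℕ => 1 / (((k : ℝ) + 2) * ((k : ℝ) + 1))) 1 := by
  rw [hasSum_iff_tendsto_nat_of_nonneg (fun k => by positivity)]
  have partial_sum (N : ℕ) :
      ∑ k ∈ range N, 1 / (((k : ℝ) + 2) * ((k : ℝ) + 1)) = 1 - 1 / ((N : ℝ) + 1) := by
    calc ∑ k ∈ range N, 1 / (((k : ℝ) + 2) * ((k : ℝ) + 1))
        = ∑ k ∈ range N, (1 / ((k : ℝ) + 1) - 1 / (((k + 1 : ℕ) : ℝ) + 1)) :=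
          sum_congr rfl fun k _ => by push_cast; field_simp; ring
      _ = 1 - 1 / ((N : ℝ) + 1) := by rw [sum_range_sub']; norm_num
  simp_rw [partial_sum]
  simpa using tendsto_const_nhds.sub (tendsto_one_div_add_atTop_nhds_zero_nat (𝕜 := ℝ))

theorem hasSum_one_div_nat_pow_riemannZeta {j : ℕ} (hj : 1 < j) :
    HasSum (fun n : ℕ => 1 / (n : ℂ) ^ j) (riemannZeta j) := by
  have hs : Summable (fun n : ℕ => 1 / (n : ℂ) ^ j) := by
    simpa only [Complex.cpow_natCast] using
      Complex.summable_one_div_nat_cpow.mpr (by simpa using hj : 1 < (j : ℂ).re)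
  exact zeta_nat_eq_tsum_of_gt_one hj ▸ hs.hasSum

theorem hasSum_one_div_add_two_pow_riemannZeta_sub_one {j : ℕ} (hj : 1 < j) :
    HasSum (fun k : ℕ => 1 / ((k : ℂ) + 2) ^ j) (riemannZeta j - 1) := by
  have := (hasSum_nat_add_iff' 2).mpr (hasSum_one_div_nat_pow_riemannZeta hj)
  simpa [sum_range_succ, zero_pow (by omega : j ≠ 0)] using this

theorem hasSum_one_div_add_two_pow_mul_add_one {n : ℕ} (hn : 1 ≤ n) :
    HasSum (fun k : ℕ => 1 / (((k : ℂ) + 2) ^ n * ((k : ℂ) + 1)))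
      (n - ∑ j ∈ Icc 2 n, riemannZeta j) := by
  induction n, hn using Nat.le_induction with
  | base =>
    simpa using Complex.hasSum_ofReal.mpr hasSum_one_div_add_two_mul_add_one
  | succ n hn ih =>
    have hsplit (k : ℕ) : 1 / (((k : ℂ) + 2) ^ (n + 1) * ((k : ℂ) + 1)) =
        1 / (((k : ℂ) + 2) ^ n * ((k : ℂ) + 1)) - 1 / ((k : ℂ) + 2) ^ (n + 1) :=
      one_div_pow_succ_mul_eq_sub (by norm_cast) (by norm_cast) (by ring) n
    simp only [hsplit]
    have hvalue : ((n + 1 : ℕ) : ℂ) - ∑ j ∈ Icc 2 (n + 1), riemannZeta j =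
        (n - ∑ j ∈ Icc 2 n, riemannZeta j) - (riemannZeta (n + 1 : ℕ) - 1) := by
      rw [sum_Icc_succ_top (by omega)]
      push_cast
      ring
    rw [hvalue]
    exact ih.sub (hasSum_one_div_add_two_pow_riemannZeta_sub_one (by omega))

theorem tsum_inv_pow_mul_pred (n : ℕ) (hn : 2 ≤ n) :
    ∑' k : ℕ, 1 / (((k : ℂ) + 2) ^ n * ((k : ℂ) + 1)) =
      (n : ℂ) - ∑ j ∈ Finset.Icc 2 n, riemannZeta (j : ℂ) :=
  (hasSum_one_div_add_two_pow_mul_add_one (by omega)).tsum_eq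
end

section
/- ∑_{n=1}^∞ (1/n)·(n − ζ(2) − ζ(3) − ⋯ − ζ(n)) = ∑_{n=1}^∞ (1/n)·ln(1 + 1/n), where the n = 1 term on the left is 1 (empty zeta sum). -/
/-!
For `N ≥ 1`, `N - ζ(2) - ⋯ - ζ(N) = ∑_{m ≥ 2} 1 / ((m - 1) m^N)`: at `N = 1` this is the
telescoping sum `∑ 1 / ((m - 1) m) = 1`, and passing from `N` to `N + 1` subtracts
`ζ(N + 1) - 1 = ∑_{m ≥ 2} m^{-(N + 1)}`. Substituting this, the left side becomes a double series
of nonnegative terms; summing it over `N` first gives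
`∑_N m^{-N} / N = -log (1 - 1/m) = log (1 + 1/(m - 1))`.
-/

open Finset

lemma hasSum_one_div_succ_mul_succ_succ :
    HasSum (fun k : ℕ => 1 / (((k : ℝ) + 1) * ((k : ℝ) + 2))) 1 := by
  rw [hasSum_iff_tendsto_nat_of_nonneg (fun k => by positivity)]
  have partial_sum (n : ℕ) :
      ∑ k ∈ range n, 1 / (((k : ℝ) + 1) * ((k : ℝ) + 2)) = 1 - 1 / ((n : ℝ) + 1) := by
    induction n with
    | zero => simp
    | succ n ih =>
      rw [sum_range_succ, ih]
      push_cast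
      field_simp
      ring
  simp only [partial_sum]
  simpa using tendsto_const_nhds.sub (tendsto_one_div_add_atTop_nhds_zero_nat (𝕜 := ℝ))

lemma hasSum_one_div_nat_add_two_pow_riemannZeta {N : ℕ} (hN : 1 < N) :
    HasSum (fun k : ℕ => 1 / ((k : ℂ) + 2) ^ N) (riemannZeta N - 1) := by
  have hs : Summable (fun n : ℕ => 1 / (n : ℂ) ^ N) := by
    simpa using Complex.summable_one_div_nat_cpow.mpr (by simpa : 1 < ((N : ℂ)).re)
  rw [zeta_nat_eq_tsum_of_gt_one hN]
  have := (hasSum_nat_add_iff' 2).mpr hs.hasSum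
  simpa [sum_range_succ, zero_pow (by omega : N ≠ 0), add_assoc, one_add_one_eq_two] using this

lemma hasSum_sub_sum_riemannZeta {N : ℕ} (hN : 1 ≤ N) :
    HasSum (fun k : ℕ => ((1 / (((k : ℝ) + 1) * ((k : ℝ) + 2) ^ N) : ℝ) : ℂ))
      (N - ∑ j ∈ Icc 2 N, riemannZeta j) := by
  induction N, hN using Nat.le_induction with
  | base => simpa using Complex.hasSum_ofReal.mpr hasSum_one_div_succ_mul_succ_succ
  | succ N hN ih =>
    have hterm (k : ℕ) : ((1 / (((k : ℝ) + 1) * ((k : ℝ) + 2) ^ (N + 1)) : ℝ) : ℂ) =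
        ((1 / (((k : ℝ) + 1) * ((k : ℝ) + 2) ^ N) : ℝ) : ℂ) - 1 / ((k : ℂ) + 2) ^ (N + 1) := by
      have hk : (k : ℂ) + 2 ≠ 0 := by norm_cast
      push_cast
      field_simp
      ring
    have hvalue : ((N + 1 : ℕ) : ℂ) - ∑ j ∈ Icc 2 (N + 1), riemannZeta j =
        (N - ∑ j ∈ Icc 2 N, riemannZeta j) - (riemannZeta (N + 1 : ℕ) - 1) := by
      rw [sum_Icc_succ_top (by omega)]
      push_cast
      ring
    rw [funext hterm, hvalue]
    exact ih.sub (hasSum_one_div_nat_add_two_pow_riemannZeta (by omega))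

lemma hasSum_pow_div_log_one_add_inv {x : ℝ} (hx : 0 < x) :
    HasSum (fun n : ℕ => (1 / (x + 1)) ^ (n + 1) / (n + 1)) (Real.log (1 + 1 / x)) := by
  have hlt : |1 / (x + 1)| < 1 := by
    rw [abs_of_pos (by positivity), div_lt_one (by positivity)]
    linarith
  convert Real.hasSum_pow_div_log_of_abs_lt_one hlt using 1
  rw [← Real.log_inv, one_sub_div (by positivity), add_sub_cancel_right, inv_div, add_div, div_self hx.ne']

/-- The term `m^{-N} / (N (m - 1))` of the double series, at `N = n + 1`, `m = k + 2`. -/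
noncomputable def zetaLogSummand (n k : ℕ) : ℝ :=
  1 / ((k : ℝ) + 1) * ((1 / ((k : ℝ) + 1 + 1)) ^ (n + 1) / (n + 1))

lemma zetaLogSummand_nonneg (n k : ℕ) : 0 ≤ zetaLogSummand n k := by
  unfold zetaLogSummand
  positivity

lemma hasSum_zetaLogSummand_row (n : ℕ) :
    HasSum (fun k => (zetaLogSummand n k : ℂ))
      (1 / ((n : ℂ) + 1) * (((n : ℂ) + 1) - ∑ j ∈ Icc 2 (n + 1), riemannZeta j)) := by
  have hterm (k : ℕ) : (zetaLogSummand n k : ℂ) =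
      1 / ((n : ℂ) + 1) * ((1 / (((k : ℝ) + 1) * ((k : ℝ) + 2) ^ (n + 1)) : ℝ) : ℂ) := by
    unfold zetaLogSummand
    push_cast
    rw [div_pow, one_pow, add_assoc, one_add_one_eq_two]
    field_simp
  simpa [funext hterm] using (hasSum_sub_sum_riemannZeta (N := n + 1) (by omega)).mul_left _

lemma hasSum_zetaLogSummand_column (k : ℕ) :
    HasSum (fun n => zetaLogSummand n k) (1 / ((k : ℝ) + 1) * Real.log (1 + 1 / ((k : ℝ) + 1))) :=
  (hasSum_pow_div_log_one_add_inv (by positivity)).mul_left _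

lemma summable_zetaLogSummand : Summable (Function.uncurry fun k n => zetaLogSummand n k) := by
  refine (summable_prod_of_nonneg fun p => zetaLogSummand_nonneg p.2 p.1).mpr
    ⟨fun k => (hasSum_zetaLogSummand_column k).summable, ?_⟩
  simp only [fun k => (hasSum_zetaLogSummand_column k).tsum_eq]
  have hsq : Summable (fun k : ℕ => 1 / ((k : ℝ) + 1) ^ 2) := by
    simpa using (summable_nat_add_iff 1).mpr (Real.summable_one_div_nat_pow.mpr one_lt_two)
  refine hsq.of_nonneg_of_le (fun k => ?_) (fun k => ?_)
  · have : 0 ≤ Real.log (1 + 1 / ((k : ℝ) + 1)) := Real.log_nonneg (by simp; positivity)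
    positivity
  · rw [sq, ← one_div_mul_one_div]
    gcongr
    linarith [Real.log_le_sub_one_of_pos (x := 1 + 1 / ((k : ℝ) + 1)) (by positivity)]

theorem series_n_minus_zeta_sums :
    ∑' n : ℕ, (1 / ((n : ℂ) + 1)) *
        (((n : ℂ) + 1) - ∑ j ∈ Finset.Icc 2 (n + 1), riemannZeta (j : ℂ)) =
      ((∑' n : ℕ, (1 / ((n : ℝ) + 1)) * Real.log (1 + 1 / ((n : ℝ) + 1)) : ℝ) : ℂ) := by
  calc _ = ∑' n : ℕ, ((∑' k : ℕ, zetaLogSummand n k : ℝ) : ℂ) := by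
        simp_rw [Complex.ofReal_tsum, fun n => (hasSum_zetaLogSummand_row n).tsum_eq]
    _ = ((∑' k : ℕ, ∑' n : ℕ, zetaLogSummand n k : ℝ) : ℂ) := by
        rw [← summable_zetaLogSummand.tsum_comm, Complex.ofReal_tsum]
    _ = _ := by simp_rw [fun k => (hasSum_zetaLogSummand_column k).tsum_eq]
end

section
/- ∫_0^1 ((1−u) ln(1−u))/(u ln u) du = ∑_{n=1}^∞ (1/n)·ln(1 + 1/n). -/
/-!
Since `-log (1 - u) = ∑ uⁿ⁺¹ / (n + 1)`, the integrand is the sum of the nonnegative functions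
`(uⁿ⁺¹ - uⁿ) / ((n + 1) log u)`, so the integral is the sum of their integrals. Each of these is a
Frullani-type integral: `(uᵇ - uᵃ) / log u = ∫_a^b uˢ ds`, and exchanging the two integrations gives
`∫₀¹ (uᵇ - uᵃ) / log u du = ∫_a^b ds / (s + 1) = log ((b + 1) / (a + 1))`.
-/

open Real MeasureTheory Set intervalIntegral
open scoped Interval

theorem integral_const_rpow {x : ℝ} (hx : 0 < x) (hx1 : x ≠ 1) (a b : ℝ) :
    ∫ s in a..b, x ^ s = (x ^ b - x ^ a) / log x := by
  have hlog : log x ≠ 0 := log_ne_zero_of_pos_of_ne_one hx hx1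
  have hderiv (s : ℝ) : HasDerivAt (fun s => x ^ s / log x) (x ^ s) s := by
    simpa [hlog] using (hasStrictDerivAt_const_rpow hx s).hasDerivAt.div_const (log x)
  rw [integral_eq_sub_of_hasDerivAt (fun s _ => hderiv s)
    ((continuous_const_rpow hx.ne').intervalIntegrable a b), sub_div]

theorem integral_rpow_zero_one {s : ℝ} (hs : -1 < s) : ∫ x in (0:ℝ)..1, x ^ s = (s + 1)⁻¹ := by
  rw [integral_rpow (Or.inl hs), one_rpow, zero_rpow (by linarith), sub_zero, one_div]

theorem integrableOn_rpow_uIoc_prod {a b : ℝ} (ha : -1 < a) (hb : -1 < b) :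
    IntegrableOn (fun p : ℝ × ℝ => p.1 ^ p.2) (Ι 0 1 ×ˢ Ι a b) := by
  have hmin : ∀ s ∈ Ι a b, -1 < s := fun s hs => lt_of_lt_of_le (lt_min ha hb) hs.1.le
  rw [IntegrableOn, Measure.volume_eq_prod, ← Measure.prod_restrict,
    integrable_prod_iff' (measurable_fst.pow measurable_snd).aestronglyMeasurable]
  constructor
  · filter_upwards [ae_restrict_mem measurableSet_uIoc] with s hs
    exact (intervalIntegrable_rpow' (hmin s hs)).def'
  · have hcont : ContinuousOn (fun s : ℝ => (s + 1)⁻¹) (uIcc a b) :=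
      (continuous_add_const 1).continuousOn.inv₀ fun s hs => by
        linarith [lt_of_lt_of_le (lt_min ha hb) hs.1]
    refine ((hcont.integrableOn_uIcc).mono_set uIoc_subset_uIcc).congr_fun (fun s hs => ?_)
      measurableSet_uIoc
    dsimp only
    rw [← integral_rpow_zero_one (hmin s hs), intervalIntegral.integral_of_le zero_le_one,
      uIoc_of_le zero_le_one]
    exact setIntegral_congr_fun measurableSet_Ioc fun x hx =>
      (norm_of_nonneg (rpow_nonneg hx.1.le s)).symm

theorem rpow_sub_rpow_div_log_ae_eq_integral (a b : ℝ) :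
    (fun x => (x ^ b - x ^ a) / log x) =ᵐ[volume.restrict (Ι 0 1)]
      fun x => ∫ s in a..b, x ^ s := by
  filter_upwards [ae_restrict_mem measurableSet_uIoc,
    ae_restrict_of_ae (measure_eq_zero_iff_ae_notMem.mp (measure_singleton (1 : ℝ)))]
    with x hx hx1
  exact (integral_const_rpow (by simpa using hx.1) hx1 a b).symm

theorem intervalIntegrable_rpow_sub_rpow_div_log {a b : ℝ} (ha : -1 < a) (hb : -1 < b) :
    IntervalIntegrable (fun x => (x ^ b - x ^ a) / log x) volume 0 1 := by
  have hprod := integrableOn_rpow_uIoc_prod ha hb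
  rw [IntegrableOn, Measure.volume_eq_prod, ← Measure.prod_restrict] at hprod
  rw [intervalIntegrable_iff]
  refine Integrable.congr ?_ (rpow_sub_rpow_div_log_ae_eq_integral a b).symm
  simp_rw [intervalIntegral_eq_integral_uIoc]
  exact hprod.integral_prod_left.smul (if a ≤ b then (1 : ℝ) else -1)

theorem integral_rpow_sub_rpow_div_log {a b : ℝ} (ha : -1 < a) (hb : -1 < b) :
    ∫ x in (0:ℝ)..1, (x ^ b - x ^ a) / log x = log ((b + 1) / (a + 1)) := calc
  _ = ∫ x in (0:ℝ)..1, ∫ s in a..b, x ^ s :=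
    integral_congr_ae ((ae_restrict_iff' measurableSet_uIoc).mp
      (rpow_sub_rpow_div_log_ae_eq_integral a b))
  _ = ∫ s in a..b, ∫ x in (0:ℝ)..1, x ^ s :=
    intervalIntegral_intervalIntegral_swap (integrableOn_rpow_uIoc_prod ha hb)
  _ = ∫ s in a..b, (s + 1)⁻¹ := integral_congr fun s hs =>
    integral_rpow_zero_one (lt_of_lt_of_le (lt_min ha hb) hs.1)
  _ = log ((b + 1) / (a + 1)) := by
    rw [integral_comp_add_right (fun s => s⁻¹), integral_inv_of_pos (by linarith) (by linarith)]

noncomputable def logSeriesTerm (n : ℕ) (x : ℝ) : ℝ := (x ^ (n + 1) - x ^ n) / ((n + 1) * log x)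

theorem logSeriesTerm_eq_rpow (n : ℕ) :
    logSeriesTerm n = fun x => ((n : ℝ) + 1)⁻¹ * ((x ^ ((n : ℝ) + 1) - x ^ (n : ℝ)) / log x) := by
  funext x
  rw [logSeriesTerm, ← Nat.cast_add_one, rpow_natCast, rpow_natCast]
  ring

theorem hasSum_logSeriesTerm {x : ℝ} (hx : x ∈ Ioo 0 1) :
    HasSum (fun n => logSeriesTerm n x) ((1 - x) * log (1 - x) / (x * log x)) := by
  have hlog : log x ≠ 0 := (log_neg hx.1 hx.2).ne
  have hx0 : x ≠ 0 := hx.1.ne'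
  have hterm (n : ℕ) : x ^ (n + 1) / (n + 1) * ((x - 1) / (x * log x)) = logSeriesTerm n x := by
    rw [logSeriesTerm]
    field_simp
    ring
  have hsum : -log (1 - x) * ((x - 1) / (x * log x)) = (1 - x) * log (1 - x) / (x * log x) := by
    ring
  simpa only [hterm, hsum] using
    (hasSum_pow_div_log_of_abs_lt_one (abs_lt.2 ⟨by linarith [hx.1], hx.2⟩)).mul_right
      ((x - 1) / (x * log x))

theorem logSeriesTerm_nonneg (n : ℕ) {x : ℝ} (hx : x ∈ Ioo 0 1) : 0 ≤ logSeriesTerm n x :=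
  div_nonneg_of_nonpos
    (sub_nonpos.2 (pow_le_pow_of_le_one hx.1.le hx.2.le n.le_succ))
    (mul_nonpos_of_nonneg_of_nonpos (by positivity) (log_nonpos hx.1.le hx.2.le))

theorem intervalIntegrable_logSeriesTerm (n : ℕ) :
    IntervalIntegrable (logSeriesTerm n) volume 0 1 := by
  have hn : (-1 : ℝ) < n := neg_one_lt_zero.trans_le n.cast_nonneg
  rw [logSeriesTerm_eq_rpow]
  exact (intervalIntegrable_rpow_sub_rpow_div_log hn (by linarith)).const_mul _

theorem integral_logSeriesTerm (n : ℕ) :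
    ∫ x in (0:ℝ)..1, logSeriesTerm n x = 1 / ((n : ℝ) + 1) * log (1 + 1 / ((n : ℝ) + 1)) := by
  have hn : (0 : ℝ) < n + 1 := by positivity
  simp only [logSeriesTerm_eq_rpow]
  rw [intervalIntegral.integral_const_mul,
    integral_rpow_sub_rpow_div_log (by linarith) (by linarith), one_div,
    add_div, div_self hn.ne', one_div]

theorem summable_one_div_mul_log_one_add_one_div :
    Summable fun n : ℕ => 1 / ((n : ℝ) + 1) * log (1 + 1 / ((n : ℝ) + 1)) := by
  have hsq : Summable fun n : ℕ => 1 / ((n : ℝ) + 1) ^ 2 := by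
    exact_mod_cast (summable_nat_add_iff 1).2 (summable_one_div_nat_pow.2 one_lt_two)
  refine hsq.of_nonneg_of_le (fun n => ?_) (fun n => ?_)
  · have : (0 : ℝ) ≤ 1 / (n + 1) := by positivity
    exact mul_nonneg this (log_nonneg (by linarith))
  · calc 1 / ((n : ℝ) + 1) * log (1 + 1 / ((n : ℝ) + 1))
        ≤ 1 / ((n : ℝ) + 1) * (1 / ((n : ℝ) + 1)) := by
          gcongr
          linarith [log_le_sub_one_of_pos (by positivity : (0 : ℝ) < 1 + 1 / (n + 1))]
      _ = 1 / ((n : ℝ) + 1) ^ 2 := by rw [one_div_mul_one_div, sq]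

theorem integral_eq_log_series :
    ∫ u in (0:ℝ)..1, ((1 - u) * Real.log (1 - u)) / (u * Real.log u) =
      ∑' n : ℕ, (1 / ((n : ℝ) + 1)) * Real.log (1 + 1 / ((n : ℝ) + 1)) := by
  have hint (n : ℕ) : IntegrableOn (logSeriesTerm n) (Ioo 0 1) :=
    (intervalIntegrable_logSeriesTerm n).1.mono_set Ioo_subset_Ioc_self
  have hterm (n : ℕ) :
      ∫ x in Ioo 0 1, logSeriesTerm n x = 1 / ((n : ℝ) + 1) * log (1 + 1 / ((n : ℝ) + 1)) := by
    rw [← integral_Ioc_eq_integral_Ioo, ← intervalIntegral.integral_of_le zero_le_one,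
      integral_logSeriesTerm]
  have hnorm (n : ℕ) : ∫ x in Ioo 0 1, ‖logSeriesTerm n x‖ = ∫ x in Ioo 0 1, logSeriesTerm n x :=
    setIntegral_congr_fun measurableSet_Ioo fun x hx => norm_of_nonneg (logSeriesTerm_nonneg n hx)
  rw [intervalIntegral.integral_of_le zero_le_one, integral_Ioc_eq_integral_Ioo]
  calc _ = ∫ x in Ioo 0 1, ∑' n, logSeriesTerm n x :=
        setIntegral_congr_fun measurableSet_Ioo fun x hx => (hasSum_logSeriesTerm hx).tsum_eq.symm
    _ = ∑' n, ∫ x in Ioo 0 1, logSeriesTerm n x :=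
        (integral_tsum_of_summable_integral_norm hint
          (by simpa only [hnorm, hterm] using summable_one_div_mul_log_one_add_one_div)).symm
    _ = _ := tsum_congr hterm
end

section
/- ∑_{n=2}^∞ H_n (ζ(n) − ζ(n+1)) = π²/6 − γ. -/
/-!
Writing `ζ(m) - ζ(m + 1) = ∑_{k ≥ 2} (k⁻¹ ^ m - k⁻¹ ^ (m + 1))` and swapping the two sums of
nonnegative terms, the sum over `m` for fixed `k` is `(1 - x) ∑_{m ≥ 2} H_m x ^ m` at `x = 1 / k`,
which the generating function `∑ H_m x ^ m = -log (1 - x) / (1 - x)` evaluates to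
`log k - log (k - 1) - 1 / k + 1 / k ^ 2`. Summed over `k ≥ 2`, the first three terms give `1 - γ`
and the last gives `ζ(2) - 1`.
-/

open Real Finset

lemma harmonic_le_self (n : ℕ) : harmonic n ≤ n := by
  induction n with
  | zero => simp
  | succ n ih =>
    rw [harmonic_succ]
    push_cast
    linarith [inv_le_one_of_one_le₀ (by simp : (1 : ℚ) ≤ n + 1)]

lemma hasSum_harmonic_mul_pow {x : ℝ} (hx : |x| < 1) :
    HasSum (fun n ↦ (harmonic n : ℝ) * x ^ n) (-log (1 - x) / (1 - x)) := by
  obtain ⟨S, hS⟩ : Summable fun n ↦ (harmonic n : ℝ) * x ^ n := by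
    refine .of_norm_bounded
      (summable_pow_mul_geometric_of_norm_lt_one 1 (by rwa [norm_abs_eq_norm])) fun n ↦ ?_
    rw [norm_mul, norm_pow, Real.norm_eq_abs, Real.norm_eq_abs, pow_one,
      abs_of_nonneg (by rw [harmonic]; positivity : (0 : ℝ) ≤ harmonic n)]
    gcongr
    exact_mod_cast harmonic_le_self n
  have hshift : HasSum (fun n ↦ (harmonic (n + 1) : ℝ) * x ^ (n + 1)) S := by
    simpa using (hasSum_nat_add_iff' 1).mpr hS
  -- `H (n + 1) - H n = 1 / (n + 1)`, so `(1 - x) ∑ H n x ^ n = ∑ x ^ (n + 1) / (n + 1)`.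
  have hlog : HasSum (fun n : ℕ ↦ x ^ (n + 1) / (n + 1)) (S - x * S) :=
    (hshift.sub (hS.mul_left x)).congr_fun fun n ↦ by
      rw [harmonic_succ]
      push_cast
      ring
  have h1x : 1 - x ≠ 0 := by linarith [le_abs_self x]
  rw [(hasSum_pow_div_log_of_abs_lt_one hx).unique hlog, ← one_sub_mul, mul_div_cancel_left₀ _ h1x]
  exact hS

lemma hasSum_harmonic_mul_pow_sub_pow_succ {x : ℝ} (hx : |x| < 1) :
    HasSum (fun n ↦ (harmonic (n + 2) : ℝ) * (x ^ (n + 2) - x ^ (n + 3)))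
      (-log (1 - x) - x + x ^ 2) := by
  have h1x : 1 - x ≠ 0 := by linarith [le_abs_self x]
  have h := ((hasSum_nat_add_iff' 2).mpr (hasSum_harmonic_mul_pow hx)).mul_right (1 - x)
  have hval : (-log (1 - x) / (1 - x) - ∑ i ∈ range 2, (harmonic i : ℝ) * x ^ i) * (1 - x)
      = -log (1 - x) - x + x ^ 2 := by
    simp only [sum_range_succ, range_one, sum_singleton, harmonic_zero, Rat.cast_zero, pow_zero,
      mul_one, harmonic_succ, zero_add, Nat.cast_one, inv_one, Rat.cast_one, pow_one, one_mul]
    field_simp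
    ring
  rw [← hval]
  exact h.congr_fun fun n ↦ by ring

theorem HasSum.tsum_comm_of_nonneg {α β : Type*} {f : α → β → ℝ} {s : ℝ}
    (hf : ∀ a b, 0 ≤ f a b) (hrow : ∀ a, Summable (f a)) (h : HasSum (fun a ↦ ∑' b, f a b) s) :
    HasSum (fun b ↦ ∑' a, f a b) s := by
  have hsum : Summable (Function.uncurry f) :=
    (summable_prod_of_nonneg fun p ↦ hf p.1 p.2).2 ⟨hrow, h.summable⟩
  have hs : HasSum (Function.uncurry f) s := by
    rw [← (hsum.hasSum.prod_fiberwise fun a ↦ (hrow a).hasSum).unique h]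
    exact hsum.hasSum
  have hswap := (Equiv.prodComm β α).hasSum_iff.mpr hs
  exact hswap.prod_fiberwise fun b ↦
    ((summable_prod_of_nonneg fun p ↦ hf p.2 p.1).1 hswap.summable).1 b |>.hasSum

lemma riemannZeta_natCast_eq_tsum {k : ℕ} (hk : 1 < k) :
    riemannZeta k = ↑(∑' n : ℕ, ((n : ℝ)⁻¹) ^ k) := by
  rw [zeta_nat_eq_tsum_of_gt_one hk, Complex.ofReal_tsum]
  push_cast
  simp [one_div, inv_pow]

lemma riemannZeta_sub_riemannZeta_add_one {m : ℕ} (hm : 1 < m) :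
    riemannZeta m - riemannZeta (m + 1 : ℕ) =
      ↑(∑' j : ℕ, ((((j : ℝ) + 2)⁻¹) ^ m - (((j : ℝ) + 2)⁻¹) ^ (m + 1))) := by
  have hs : ∀ {k : ℕ}, 1 < k → Summable fun n : ℕ ↦ ((n : ℝ)⁻¹) ^ k := fun hk ↦ by
    simpa [inv_pow] using Real.summable_nat_pow_inv.mpr hk
  rw [riemannZeta_natCast_eq_tsum hm, riemannZeta_natCast_eq_tsum (by omega),
    ← Complex.ofReal_sub, ← (hs hm).tsum_sub (hs (by omega)),
    ← ((hs hm).sub (hs (by omega))).sum_add_tsum_nat_add 2]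
  -- the terms `k = 0` and `k = 1` are `0 - 0` and `1 - 1`
  simp [sum_range_succ, zero_pow (by omega : m ≠ 0)]

lemma hasSum_neg_log_one_sub_inv_sub_inv_add_inv_sq :
    HasSum (fun j : ℕ ↦ -log (1 - ((j : ℝ) + 2)⁻¹) - ((j : ℝ) + 2)⁻¹ + (((j : ℝ) + 2)⁻¹) ^ 2)
      (π ^ 2 / 6 - eulerMascheroniConstant) := by
  have hsq : HasSum (fun j : ℕ ↦ (((j : ℝ) + 2)⁻¹) ^ 2) (π ^ 2 / 6 - 1) := by
    have h := (hasSum_nat_add_iff' 2).mpr hasSum_zeta_two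
    rw [show ∑ i ∈ range 2, (1 : ℝ) / (i : ℝ) ^ 2 = 1 by norm_num [sum_range_succ]] at h
    exact h.congr_fun fun j ↦ by push_cast; rw [one_div, inv_pow]
  rw [show π ^ 2 / 6 - eulerMascheroniConstant = 1 - eulerMascheroniConstant + (π ^ 2 / 6 - 1) by
    ring]
  refine (ZetaAsymptotics.term_tsum_one.add hsq).congr_fun fun j ↦ ?_
  have hlog : -log (1 - ((j : ℝ) + 2)⁻¹) = log ((j : ℝ) + 2) - log ((j : ℝ) + 1) := by
    rw [show 1 - ((j : ℝ) + 2)⁻¹ = ((j : ℝ) + 1) / ((j : ℝ) + 2) by field_simp; ring,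
      log_div (by positivity) (by positivity)]
    ring
  rw [hlog, ZetaAsymptotics.term_one j.succ_pos, Nat.cast_succ, add_assoc, one_add_one_eq_two]
  ring

theorem harmonic_zeta_diff_series :
    ∑' n : ℕ, (harmonic (n + 2) : ℂ) *
        (riemannZeta ((n : ℂ) + 2) - riemannZeta ((n : ℂ) + 3)) =
      (Real.pi : ℂ) ^ 2 / 6 - (Real.eulerMascheroniConstant : ℂ) := by
  set x : ℕ → ℝ := fun j ↦ ((j : ℝ) + 2)⁻¹
  have hx0 : ∀ j, 0 ≤ x j := fun j ↦ by positivity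
  have hx1 : ∀ j, x j < 1 := fun j ↦ inv_lt_one_of_one_lt₀ (by linarith [j.cast_nonneg (α := ℝ)])
  have hrow : ∀ j, HasSum (fun n ↦ (harmonic (n + 2) : ℝ) * (x j ^ (n + 2) - x j ^ (n + 3)))
      (-log (1 - x j) - x j + x j ^ 2) := fun j ↦
    hasSum_harmonic_mul_pow_sub_pow_succ (by rw [abs_of_nonneg (hx0 j)]; exact hx1 j)
  have hcol := HasSum.tsum_comm_of_nonneg
    (fun j n ↦ mul_nonneg (by rw [harmonic]; positivity)
      (sub_nonneg.2 (pow_le_pow_of_le_one (hx0 j) (hx1 j).le (by omega))))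
    (fun j ↦ (hrow j).summable)
    (hasSum_neg_log_one_sub_inv_sub_inv_add_inv_sq.congr_fun fun j ↦ (hrow j).tsum_eq)
  have hterm : ∀ n : ℕ, (harmonic (n + 2) : ℂ) *
      (riemannZeta ((n : ℂ) + 2) - riemannZeta ((n : ℂ) + 3)) =
        ↑(∑' j, (harmonic (n + 2) : ℝ) * (x j ^ (n + 2) - x j ^ (n + 3))) := fun n ↦ by
    have h := riemannZeta_sub_riemannZeta_add_one (m := n + 2) (by omega)
    rw [show (n : ℂ) + 2 = (n + 2 : ℕ) by push_cast; ring,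
      show (n : ℂ) + 3 = (n + 2 + 1 : ℕ) by push_cast; ring, h, tsum_mul_left, Complex.ofReal_mul,
      Complex.ofReal_ratCast]
  rw [tsum_congr hterm, ← Complex.ofReal_tsum, hcol.tsum_eq]
  push_cast
  ring
end
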